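/- arXiv:2506.00663 — 4 statements merged into one kernel-verified Lean document; each statement's English description precedes it below -/
import Mathlib

section
/- If f(z) = Σ_{n=0}^∞ a_n z^n converges for |z| ≤ r and g(z) = Σ_{n=0}^∞ b_n z^n converges for |z| ≤ ρ, then for |z| < ρ r, (1/(2πi)) ∫_{|w|=r} f(w) g(z/w) dw/w = Σ_{n=0}^∞ a_n b_n z^n. -/
/-!
On the circle `|w| = r` we have `|z / w| = |z| / r < ρ`, so `g (z / w) = ∑ bₙ zⁿ w⁻ⁿ` converges
there, dominated by `(sup_{|w| = r} |f|) / r · ∑ |bₙ| (|z| / r)ⁿ`. Integrating term by term, the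
`n`-th term is `bₙ zⁿ ∮ f(w) w⁻ⁿ⁻¹ dw = 2πi aₙ bₙ zⁿ` by Cauchy's formula for the coefficients of `f`.
-/

open Complex Real Metric FormalMultilinearSeries
open scoped ENNReal NNReal

theorem Metric.closedBall_subset_eball_of_ofReal_lt {α : Type*} [PseudoMetricSpace α] {x : α}
    {r : ℝ} {R : ℝ≥0∞} (h : ENNReal.ofReal r < R) : closedBall x r ⊆ eball x R :=
  fun _ hy => ((edist_le_ofReal (dist_nonneg.trans hy)).2 hy).trans_lt h

section OfScalars

variable {𝕜 : Type*} [RCLike 𝕜] {a : ℕ → 𝕜} {R : ℝ}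

theorem ofReal_le_radius_ofScalars (h : ∀ z : 𝕜, ‖z‖ < R → Summable fun n => a n * z ^ n) :
    ENNReal.ofReal R ≤ (ofScalars 𝕜 a).radius := by
  refine ENNReal.le_of_forall_nnreal_lt fun t ht => ?_
  refine (ofScalars 𝕜 a).le_radius_of_tendsto (l := 0) ?_
  have ht' : ‖((t : ℝ) : 𝕜)‖ < R := by simpa using ENNReal.coe_lt_ofReal.1 ht
  simpa [ofScalars_norm] using (h _ ht').tendsto_atTop_zero.norm

theorem summable_norm_mul_pow_of_lt (h : ∀ z : 𝕜, ‖z‖ < R → Summable fun n => a n * z ^ n)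
    {t : ℝ} (ht : 0 ≤ t) (htR : t < R) : Summable fun n => ‖a n‖ * t ^ n := by
  lift t to ℝ≥0 using ht
  have ht_lt : (t : ℝ≥0∞) < (ofScalars 𝕜 a).radius :=
    (ENNReal.coe_lt_ofReal.2 htR).trans_le (ofReal_le_radius_ofScalars h)
  simpa [ofScalars_norm] using (ofScalars 𝕜 a).summable_norm_mul_pow ht_lt

theorem hasFPowerSeriesOnBall_ofScalars {f : 𝕜 → 𝕜} (hR : 0 < R)
    (hf : ∀ z : 𝕜, ‖z‖ < R → HasSum (fun n => a n * z ^ n) (f z)) :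
    HasFPowerSeriesOnBall f (ofScalars 𝕜 a) 0 (ENNReal.ofReal R) where
  r_le := ofReal_le_radius_ofScalars fun z hz => (hf z hz).summable
  r_pos := ENNReal.ofReal_pos.2 hR
  hasSum {y} hy := by
    rw [mem_eball_zero_iff, ← ofReal_norm, ENNReal.ofReal_lt_ofReal_iff hR] at hy
    simpa [ofScalars_apply_eq, mul_comm] using hf y hy

end OfScalars

section CircleIntegral

variable {E : Type*} [NormedAddCommGroup E] [NormedSpace ℂ E]

theorem HasFPowerSeriesOnBall.circleIntegral_inv_pow_smul_eq_coeff [CompleteSpace E]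
    {f : ℂ → E} {p : FormalMultilinearSeries ℂ ℂ E} {c : ℂ} {R : ℝ≥0∞}
    (hf : HasFPowerSeriesOnBall f p c R) {r : ℝ} (hr : 0 < r) (hrR : ENNReal.ofReal r < R)
    (n : ℕ) : (∮ z in C(c, r), (z - c)⁻¹ ^ n • (z - c)⁻¹ • f z) = (2 * π * I) • p.coeff n := by
  have hd : DifferentiableOn ℂ f (closedBall c r) :=
    hf.differentiableOn.mono (closedBall_subset_eball_of_ofReal_lt hrR)
  lift r to ℝ≥0 using hr.le
  rw [hf.hasFPowerSeriesAt.eq_formalMultilinearSeries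
    (hd.hasFPowerSeriesOnBall (mod_cast hr)).hasFPowerSeriesAt]
  simp only [FormalMultilinearSeries.coeff, cauchyPowerSeries,
    ContinuousMultilinearMap.mkPiRing_apply, Pi.one_apply, Finset.prod_const_one, one_mul,
    smul_smul, mul_inv_cancel₀ two_pi_I_ne_zero, one_smul]

theorem hasSum_circleIntegral_of_summable_bound {F : ℕ → ℂ → E} {G : ℂ → E} {c : ℂ} {R : ℝ}
    (hR : 0 ≤ R) (bound : ℕ → ℝ) (hF : ∀ n, ContinuousOn (F n) (sphere c R))
    (hF_le : ∀ n, ∀ w ∈ sphere c R, ‖F n w‖ ≤ bound n) (h_summable : Summable bound)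
    (h_hasSum : ∀ w ∈ sphere c R, HasSum (fun n => F n w) (G w)) :
    HasSum (fun n => ∮ w in C(c, R), F n w) (∮ w in C(c, R), G w) := by
  refine intervalIntegral.hasSum_integral_of_dominated_convergence (fun n _ => R * bound n)
    (fun n => ((hF n).circleIntegrable hR).out.def'.aestronglyMeasurable) (fun n => ?_)
    (.of_forall fun _ _ => h_summable.mul_left _) intervalIntegrable_const
    (.of_forall fun θ _ => (h_hasSum _ (circleMap_mem_sphere c hR θ)).const_smul _)
  refine .of_forall fun θ _ => ?_
  rw [norm_smul, deriv_circleMap, norm_mul, norm_circleMap_zero, norm_I, mul_one,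
    abs_of_nonneg hR]
  exact mul_le_mul_of_nonneg_left (hF_le n _ (circleMap_mem_sphere c hR θ)) hR

end CircleIntegral

theorem hasSum_circleIntegral_mul_comp_div {f g : ℂ → ℂ} {b : ℕ → ℂ} {r : ℝ} {z : ℂ}
    (hr : 0 < r) (hf : ContinuousOn f (sphere 0 r))
    (hb : Summable fun n => ‖b n‖ * (‖z‖ / r) ^ n)
    (hg : ∀ w ∈ sphere (0 : ℂ) r, HasSum (fun n => b n * (z / w) ^ n) (g (z / w))) :
    HasSum (fun n => (b n * z ^ n) • ∮ w in C(0, r), w⁻¹ ^ n • w⁻¹ • f w)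
      (∮ w in C(0, r), f w * g (z / w) / w) := by
  obtain ⟨M, hM⟩ := (isCompact_sphere (0 : ℂ) r).exists_bound_of_continuousOn hf
  have hne : ∀ w ∈ sphere (0 : ℂ) r, w ≠ 0 := fun w hw => ne_zero_of_mem_sphere hr.ne' ⟨w, hw⟩
  have hcont : ∀ n, ContinuousOn (fun w => (b n * z ^ n) • (w⁻¹ ^ n • w⁻¹ • f w)) (sphere 0 r) :=
    fun n => by fun_prop (disch := assumption)
  have hbound : ∀ n, ∀ w ∈ sphere (0 : ℂ) r,
      ‖(b n * z ^ n) • (w⁻¹ ^ n • w⁻¹ • f w)‖ ≤ M / r * (‖b n‖ * (‖z‖ / r) ^ n) := by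
    intro n w hw
    have hw_norm : ‖w‖ = r := mem_sphere_zero_iff_norm.1 hw
    calc ‖(b n * z ^ n) • (w⁻¹ ^ n • w⁻¹ • f w)‖ = ‖f w‖ / r * (‖b n‖ * (‖z‖ / r) ^ n) := by
          simp only [norm_smul, norm_mul, norm_pow, norm_inv, hw_norm]; ring
      _ ≤ M / r * (‖b n‖ * (‖z‖ / r) ^ n) := by gcongr; exact hM w hw
  have hterm : ∀ w ∈ sphere (0 : ℂ) r,
      HasSum (fun n => (b n * z ^ n) • (w⁻¹ ^ n • w⁻¹ • f w)) (f w * g (z / w) / w) := by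
    intro w hw
    have hseries : (fun n => (b n * z ^ n) • (w⁻¹ ^ n • w⁻¹ • f w)) =
        fun n => f w / w * (b n * (z / w) ^ n) := by
      funext n
      simp only [smul_eq_mul, div_eq_mul_inv, mul_pow]
      ring
    rw [hseries, mul_div_right_comm]
    exact (hg w hw).mul_left _
  simpa only [circleIntegral.integral_smul] using
    hasSum_circleIntegral_of_summable_bound hr.le _ hcont hbound (hb.mul_left _) hterm

theorem hadamard_product_general (r ρ r' ρ' : ℝ) (hr : 0 < r)
    (hrr' : r < r') (hρρ' : ρ < ρ')
    (f g : ℂ → ℂ) (a b : ℕ → ℂ)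
    (hf : ∀ z : ℂ, ‖z‖ < r' → HasSum (fun n : ℕ => a n * z ^ n) (f z))
    (hg : ∀ z : ℂ, ‖z‖ < ρ' → HasSum (fun n : ℕ => b n * z ^ n) (g z)) :
    ∀ z : ℂ, ‖z‖ < ρ * r →
      (1 / (2 * π * Complex.I)) * (∮ w in C(0, r), f w * g (z / w) / w) =
        ∑' n : ℕ, a n * b n * z ^ n := by
  intro z hz
  have hzr : ‖z‖ / r < ρ' := ((div_lt_iff₀ hr).2 hz).trans hρρ'
  have hrr'_ennreal : ENNReal.ofReal r < ENNReal.ofReal r' :=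
    (ENNReal.ofReal_lt_ofReal_iff (hr.trans hrr')).2 hrr'
  have hfp := hasFPowerSeriesOnBall_ofScalars (hr.trans hrr') hf
  have hcoeff : ∀ n, (∮ w in C(0, r), w⁻¹ ^ n • w⁻¹ • f w) = 2 * π * I * a n := fun n => by
    simpa only [sub_zero, coeff_ofScalars, smul_eq_mul] using
      hfp.circleIntegral_inv_pow_smul_eq_coeff hr hrr'_ennreal n
  have hsum := hasSum_circleIntegral_mul_comp_div hr
    (hfp.continuousOn.mono (sphere_subset_closedBall.trans
      (closedBall_subset_eball_of_ofReal_lt hrr'_ennreal)))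
    (summable_norm_mul_pow_of_lt (fun u hu => (hg u hu).summable) (by positivity) hzr)
    (fun w hw => hg _ (by rwa [norm_div, mem_sphere_zero_iff_norm.1 hw]))
  simp only [hcoeff] at hsum
  rw [one_div, ← (hsum.mul_left _).tsum_eq]
  refine tsum_congr fun n => ?_
  rw [smul_eq_mul]
  field_simp [two_pi_I_ne_zero]

/-- Hadamard product formula:
`(1/(2πi)) ∮_{|w|=r} f(w) g(z/w) dw/w = Σ aₙ bₙ zⁿ` for `|z| < ρ r`. -/
theorem hadamard_product (r ρ r' ρ' : ℝ) (hr : 0 < r) (hρ : 0 < ρ)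
    (hrr' : r < r') (hρρ' : ρ < ρ')
    (f g : ℂ → ℂ) (a b : ℕ → ℂ)
    (hf : ∀ z : ℂ, ‖z‖ < r' → HasSum (fun n : ℕ => a n * z ^ n) (f z))
    (hg : ∀ z : ℂ, ‖z‖ < ρ' → HasSum (fun n : ℕ => b n * z ^ n) (g z)) :
    ∀ z : ℂ, ‖z‖ < ρ * r →
      (1 / (2 * π * Complex.I)) * (∮ w in C(0, r), f w * g (z / w) / w) =
        ∑' n : ℕ, a n * b n * z ^ n :=
  hadamard_product_general r ρ r' ρ' hr hrr' hρρ' f g a b hf hg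
end

section
/- For an integer m ≥ 2, the area of the m-leafed lemniscate region {w ∈ ℂ : |w^m - 1| < 1} equals 2^{2/m - 1} √π Γ(1/m + 1/2) / Γ(1/m + 1). -/
/-!
In polar coordinates `w = r e^{iθ}` one has `|w^m - 1| < 1 ↔ r^m < 2 cos (mθ)`, so the ray at
angle `θ` meets the region in `(0, (2 cos mθ)₊^{1/m})` and the area is
`½ ∫_{-π}^{π} (2 cos mθ)₊^{2/m} dθ`. By periodicity the factor `m` in the angle can be dropped,
leaving `2^{2/m - 1} ∫_{-π/2}^{π/2} cos^{2/m}`; the substitution `x = sin² u` turns this into the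
Beta integral `B(1/2, 1/m + 1/2)`.
-/

open MeasureTheory Complex Real Set

lemma Complex.norm_sub_one_lt_one_iff (z : ℂ) : ‖z - 1‖ < 1 ↔ ‖z‖ ^ 2 < 2 * z.re := by
  rw [← sq_lt_one_iff₀ (norm_nonneg _), Complex.sq_norm, Complex.sq_norm, Complex.normSq_apply,
    Complex.normSq_apply]
  simp only [sub_re, one_re, sub_im, one_im, sub_zero]
  constructor <;> intro h <;> nlinarith

lemma Complex.polarCoord_symm_pow (m : ℕ) (r θ : ℝ) :
    Complex.polarCoord.symm (r, θ) ^ m = Complex.polarCoord.symm (r ^ m, m * θ) := by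
  simp only [Complex.polarCoord_symm_apply, Complex.ofReal_cos, Complex.ofReal_sin, cos_add_sin_I,
    mul_pow, ← Complex.exp_nat_mul, ofReal_pow, ofReal_mul, ofReal_natCast]
  ring_nf

lemma Complex.norm_polarCoord_symm_sub_one_lt_one_iff {r : ℝ} (hr : 0 < r) (θ : ℝ) :
    ‖Complex.polarCoord.symm (r, θ) - 1‖ < 1 ↔ r < 2 * Real.cos θ := by
  rw [Complex.norm_sub_one_lt_one_iff, Complex.norm_polarCoord_symm, abs_of_pos hr]
  have hre : (Complex.polarCoord.symm (r, θ)).re = r * Real.cos θ := by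
    simp [Complex.polarCoord_symm_apply, Complex.cos_ofReal_re]
  rw [hre, sq, mul_left_comm, mul_lt_mul_iff_right₀ hr]

lemma Complex.volume_eq_lintegral_polarCoord {S : Set ℂ} (hS : MeasurableSet S) :
    volume S = ∫⁻ θ in Ioo (-π) π,
      ∫⁻ r in Ioi 0 ∩ (fun r => Complex.polarCoord.symm (r, θ)) ⁻¹' S, ENNReal.ofReal r := by
  have hsymm : Measurable Complex.polarCoord.symm :=
    measurableEquivRealProd.symm.measurable.comp continuous_polarCoord_symm.measurable
  rw [← lintegral_indicator_one hS, ← Complex.lintegral_comp_polarCoord_symm, polarCoord_target,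
    Measure.volume_eq_prod, ← Measure.prod_restrict, lintegral_prod_symm]
  · refine lintegral_congr fun θ => ?_
    have hmeas : MeasurableSet ((fun r => Complex.polarCoord.symm (r, θ)) ⁻¹' S) :=
      hS.preimage (hsymm.comp measurable_prodMk_right)
    rw [inter_comm, ← Measure.restrict_restrict hmeas, ← lintegral_indicator hmeas]
    congr 1 with r
    rw [smul_eq_mul]
    by_cases h : Complex.polarCoord.symm (r, θ) ∈ S
    · rw [indicator_of_mem h, indicator_of_mem (show r ∈ _ from h), Pi.one_apply, mul_one]
    · rw [indicator_of_notMem h, indicator_of_notMem (show r ∉ _ from h), mul_zero]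
  · exact (measurable_fst.ennreal_ofReal.smul
      ((measurable_one.indicator hS).comp hsymm)).aemeasurable

lemma Ioi_inter_setOf_pow_lt {m : ℕ} (hm : m ≠ 0) (c : ℝ) :
    Ioi 0 ∩ {r : ℝ | r ^ m < c} = Ioo 0 (max c 0 ^ (m : ℝ)⁻¹) := by
  ext r
  simp only [mem_inter_iff, mem_Ioi, mem_ofPred_eq, mem_Ioo, and_congr_right_iff]
  intro hr
  rw [lt_rpow_inv_iff_of_pos hr.le (le_max_right c 0) (by positivity), rpow_natCast,
    lt_max_iff, or_iff_left (pow_pos hr m).not_gt]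

lemma lintegral_Ioo_zero_ofReal {R : ℝ} (hR : 0 ≤ R) :
    ∫⁻ r in Ioo 0 R, ENNReal.ofReal r = ENNReal.ofReal (R ^ 2 / 2) := by
  rw [← ofReal_integral_eq_lintegral_ofReal, ← integral_Ioc_eq_integral_Ioo,
    ← intervalIntegral.integral_of_le hR, integral_id]
  · ring_nf
  · exact (continuous_id.integrableOn_Icc (a := 0) (b := R)).mono_set Ioo_subset_Icc_self
  · filter_upwards [ae_restrict_mem measurableSet_Ioo] with r hr using hr.1.le

lemma lintegral_Ioi_inter_setOf_pow_lt {m : ℕ} (hm : m ≠ 0) (c : ℝ) :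
    ∫⁻ r in Ioi 0 ∩ {r : ℝ | r ^ m < c}, ENNReal.ofReal r =
      ENNReal.ofReal (max c 0 ^ (2 / m : ℝ) / 2) := by
  rw [Ioi_inter_setOf_pow_lt hm, lintegral_Ioo_zero_ofReal (by positivity), ← rpow_natCast,
    ← rpow_mul (le_max_right c 0)]
  congr 3
  push_cast
  ring

lemma Function.Periodic.intervalIntegral_comp_natCast_mul {E : Type*} [NormedAddCommGroup E]
    [NormedSpace ℝ E] {f : ℝ → E} {T : ℝ} (hf : f.Periodic T)
    (hfi : ∀ a b, IntervalIntegrable f volume a b) {n : ℕ} (hn : n ≠ 0) (t : ℝ) :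
    ∫ x in t..t + T, f (n * x) = ∫ x in t..t + T, f x := by
  have hn' : (n : ℝ) ≠ 0 := Nat.cast_ne_zero.2 hn
  rw [intervalIntegral.integral_comp_mul_left _ hn', mul_add,
    show (n : ℝ) * T = (n : ℤ) • T by simp, hf.intervalIntegral_add_zsmul_eq _ _ hfi,
    hf.intervalIntegral_add_eq _ t, natCast_zsmul, ← Nat.cast_smul_eq_nsmul ℝ, smul_smul,
    inv_mul_cancel₀ hn', one_smul]

lemma intervalIntegral.integral_neg_self_of_even {E : Type*} [NormedAddCommGroup E]
    [NormedSpace ℝ E] {f : ℝ → E} (hf : f.Even) (hfc : Continuous f) (a : ℝ) :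
    ∫ x in -a..a, f x = (2 : ℝ) • ∫ x in 0..a, f x := by
  have hneg : ∫ x in -a..0, f x = ∫ x in 0..a, f x := by
    simpa [hf _] using (intervalIntegral.integral_comp_neg (a := 0) (b := a) f).symm
  rw [← intervalIntegral.integral_add_adjacent_intervals (b := 0) (hfc.intervalIntegrable _ _)
    (hfc.intervalIntegrable _ _), hneg, two_smul]

namespace Real

lemma strictMonoOn_sin_sq : StrictMonoOn (fun θ => sin θ ^ 2) (Icc 0 (π / 2)) :=
  (pow_left_strictMonoOn₀ two_ne_zero).comp
    (strictMonoOn_sin.mono (Icc_subset_Icc (by linarith [pi_pos]) le_rfl))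
    fun _ hθ => sin_nonneg_of_nonneg_of_le_pi hθ.1 (by linarith [hθ.2, pi_pos])

lemma image_sin_sq_Ioo : (fun θ => sin θ ^ 2) '' Ioo 0 (π / 2) = Ioo 0 1 := by
  have hends : Ioo ((fun θ => sin θ ^ 2) 0) ((fun θ => sin θ ^ 2) (π / 2)) = Ioo 0 1 := by
    simp
  refine (hends ▸ strictMonoOn_sin_sq.image_Ioo_subset).antisymm ?_
  exact hends ▸ intermediate_value_Ioo (by positivity : (0 : ℝ) ≤ π / 2)
    (by fun_prop : Continuous fun θ => sin θ ^ 2).continuousOn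

lemma integral_beta_one_half_eq_two_mul_integral_cos_rpow (s : ℝ) :
    ∫ x in (0 : ℝ)..1, x ^ (1 / 2 - 1 : ℝ) * (1 - x) ^ (s / 2 + 1 / 2 - 1) =
      2 * ∫ u in (0 : ℝ)..(π / 2), cos u ^ s := by
  have hderiv : ∀ θ ∈ Ioo (0 : ℝ) (π / 2), HasDerivWithinAt (fun θ => sin θ ^ 2)
      (2 * sin θ * cos θ) (Ioo 0 (π / 2)) θ := fun θ _ => by
    simpa [mul_assoc] using ((hasDerivAt_sin θ).fun_pow 2).hasDerivWithinAt
  have key := integral_image_eq_integral_abs_deriv_smul measurableSet_Ioo hderiv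
    (strictMonoOn_sin_sq.injOn.mono Ioo_subset_Icc_self)
    fun x => x ^ (1 / 2 - 1 : ℝ) * (1 - x) ^ (s / 2 + 1 / 2 - 1)
  rw [image_sin_sq_Ioo] at key
  rw [intervalIntegral.integral_of_le zero_le_one, integral_Ioc_eq_integral_Ioo, key,
    intervalIntegral.integral_of_le (by positivity), integral_Ioc_eq_integral_Ioo,
    ← integral_const_mul]
  refine setIntegral_congr_fun measurableSet_Ioo fun θ hθ => ?_
  have hsin : 0 < sin θ := sin_pos_of_pos_of_lt_pi hθ.1 (by linarith [hθ.2, pi_pos])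
  have hcos : 0 < cos θ := cos_pos_of_mem_Ioo ⟨by linarith [hθ.1, pi_pos], hθ.2⟩
  have hsin_sq : (sin θ ^ 2) ^ (1 / 2 - 1 : ℝ) = (sin θ)⁻¹ := by
    rw [← rpow_natCast, ← rpow_mul hsin.le]
    norm_num [rpow_neg_one]
  have hcos_sq : (1 - sin θ ^ 2) ^ (s / 2 + 1 / 2 - 1) = cos θ ^ s / cos θ := by
    rw [← cos_sq', ← rpow_natCast, ← rpow_mul hcos.le,
      show ((2 : ℕ) : ℝ) * (s / 2 + 1 / 2 - 1) = s - 1 by push_cast; ring, rpow_sub_one hcos.ne']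
  rw [smul_eq_mul, hsin_sq, hcos_sq, abs_of_pos (by positivity)]
  field_simp

lemma Gamma_mul_Gamma_eq_integral {a b : ℝ} (ha : 0 < a) (hb : 0 < b) :
    Gamma a * Gamma b = Gamma (a + b) * ∫ x in (0 : ℝ)..1, x ^ (a - 1) * (1 - x) ^ (b - 1) := by
  have h := Complex.Gamma_mul_Gamma_eq_betaIntegral (s := a) (t := b) (by simpa) (by simpa)
  have hβ : betaIntegral a b = ↑(∫ x in (0 : ℝ)..1, x ^ (a - 1) * (1 - x) ^ (b - 1)) := by
    rw [betaIntegral, ← intervalIntegral.integral_ofReal]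
    refine intervalIntegral.integral_congr fun x hx => ?_
    rw [uIcc_of_le zero_le_one] at hx
    simp only [ofReal_mul, ofReal_cpow hx.1, ofReal_cpow (sub_nonneg.2 hx.2)]
    push_cast
    ring
  rw [hβ, ← ofReal_add, Complex.Gamma_ofReal, Complex.Gamma_ofReal, Complex.Gamma_ofReal] at h
  exact_mod_cast h

lemma integral_cos_rpow {s : ℝ} (hs : 0 ≤ s) :
    ∫ u in (-(π / 2))..(π / 2), cos u ^ s = √π * Gamma (s / 2 + 1 / 2) / Gamma (s / 2 + 1) := by
  have hbeta := Gamma_mul_Gamma_eq_integral (a := 1 / 2) (b := s / 2 + 1 / 2) one_half_pos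
    (by positivity)
  rw [Gamma_one_half_eq, show (1 : ℝ) / 2 + (s / 2 + 1 / 2) = s / 2 + 1 by ring,
    integral_beta_one_half_eq_two_mul_integral_cos_rpow] at hbeta
  have hcont : Continuous fun u => cos u ^ s := (continuous_rpow_const hs).comp continuous_cos
  rw [intervalIntegral.integral_neg_self_of_even (fun u => by simp only [cos_neg]) hcont,
    eq_div_iff (Gamma_pos_of_pos (by positivity)).ne', smul_eq_mul, hbeta]
  ring

lemma integral_max_two_mul_cos_rpow {s : ℝ} (hs : 0 < s) :
    ∫ u in (-π)..π, max (2 * cos u) 0 ^ s = 2 ^ s * ∫ u in (-(π / 2))..(π / 2), cos u ^ s := by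
  set k : ℝ → ℝ := fun u => max (2 * cos u) 0 ^ s with hk
  have hkc : Continuous k := (continuous_rpow_const hs.le).comp (by fun_prop)
  have hkp : k.Periodic (2 * π) := fun u => by simp only [hk, cos_add_two_pi]
  have hshift : ∫ u in (-π)..π, k u = ∫ u in (-(π / 2))..(3 * π / 2), k u := by
    have := hkp.intervalIntegral_add_eq (-π) (-(π / 2))
    rwa [show -π + 2 * π = π by ring, show -(π / 2) + 2 * π = 3 * π / 2 by ring] at this
  have hright : ∫ u in (π / 2)..(3 * π / 2), k u = 0 := by
    refine intervalIntegral.integral_zero_ae (Filter.Eventually.of_forall fun u hu => ?_)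
    rw [uIoc_of_le (by linarith [pi_pos])] at hu
    have : cos u ≤ 0 := cos_nonpos_of_pi_div_two_le_of_le hu.1.le (by linarith [hu.2])
    simp only [hk, max_eq_right (by linarith : 2 * cos u ≤ 0), zero_rpow hs.ne']
  have hleft : ∫ u in (-(π / 2))..(π / 2), k u =
      ∫ u in (-(π / 2))..(π / 2), 2 ^ s * cos u ^ s := by
    refine intervalIntegral.integral_congr fun u hu => ?_
    rw [uIcc_of_le (by linarith [pi_pos])] at hu
    have : 0 ≤ cos u := cos_nonneg_of_mem_Icc hu
    simp only [hk, max_eq_left (by linarith : 0 ≤ 2 * cos u), mul_rpow zero_le_two this]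
  rw [hshift, ← intervalIntegral.integral_add_adjacent_intervals (b := π / 2)
    (hkc.intervalIntegrable _ _) (hkc.intervalIntegrable _ _), hright, add_zero, hleft,
    intervalIntegral.integral_const_mul]

end Real

lemma lemniscate_polar_slice (m : ℕ) (θ : ℝ) :
    Ioi 0 ∩ (fun r => Complex.polarCoord.symm (r, θ)) ⁻¹' {w : ℂ | ‖w ^ m - 1‖ < 1} =
      Ioi 0 ∩ {r : ℝ | r ^ m < 2 * Real.cos (m * θ)} := by
  ext r
  simp only [mem_inter_iff, mem_Ioi, mem_preimage, mem_ofPred_eq, and_congr_right_iff]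
  intro hr
  rw [Complex.polarCoord_symm_pow, Complex.norm_polarCoord_symm_sub_one_lt_one_iff (pow_pos hr m)]

lemma Continuous.lintegral_Ioo_ofReal {f : ℝ → ℝ} (hf : Continuous f) (hf0 : ∀ x, 0 ≤ f x)
    {a b : ℝ} (hab : a ≤ b) :
    ∫⁻ x in Ioo a b, ENNReal.ofReal (f x) = ENNReal.ofReal (∫ x in a..b, f x) := by
  rw [intervalIntegral.integral_of_le hab, integral_Ioc_eq_integral_Ioo,
    ofReal_integral_eq_lintegral_ofReal ((hf.integrableOn_Icc).mono_set Ioo_subset_Icc_self)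
      (Filter.Eventually.of_forall fun x => hf0 x)]

/-- The area of the `m`-leafed lemniscate region `{w : |wᵐ - 1| < 1}` is
`2^{2/m - 1} √π Γ(1/m + 1/2) / Γ(1/m + 1)`. -/
theorem lemniscate_area (m : ℕ) (hm : 2 ≤ m) :
    volume {w : ℂ | ‖w ^ m - 1‖ < 1} =
      ENNReal.ofReal ((2 : ℝ) ^ ((2 / (m : ℝ)) - 1) * Real.sqrt π *
        Real.Gamma (1 / (m : ℝ) + 1 / 2) / Real.Gamma (1 / (m : ℝ) + 1)) := by
  have hm0 : m ≠ 0 := by omega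
  have hs : 0 < 2 / (m : ℝ) := by positivity
  set k : ℝ → ℝ := fun u => max (2 * Real.cos u) 0 ^ (2 / (m : ℝ)) / 2 with hk
  have hkc : Continuous k := ((continuous_rpow_const hs.le).comp (by fun_prop)).div_const 2
  have hk0 : ∀ u, 0 ≤ k u := fun u => by positivity
  have hkp : k.Periodic (2 * π) := fun u => by simp only [hk, Real.cos_add_two_pi]
  have hangle := hkp.intervalIntegral_comp_natCast_mul (fun _ _ => hkc.intervalIntegrable _ _)
    hm0 (-π)
  rw [show -π + 2 * π = π by ring] at hangle
  calc volume {w : ℂ | ‖w ^ m - 1‖ < 1}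
      = ∫⁻ θ in Ioo (-π) π, ENNReal.ofReal (k (m * θ)) := by
        rw [Complex.volume_eq_lintegral_polarCoord
          (isOpen_lt (by fun_prop) (by fun_prop)).measurableSet]
        simp_rw [lemniscate_polar_slice, lintegral_Ioi_inter_setOf_pow_lt hm0]
        rfl
    _ = ENNReal.ofReal (∫ u in (-π)..π, k u) := by
        rw [← hangle]
        exact (hkc.comp (continuous_const_mul (m : ℝ))).lintegral_Ioo_ofReal
          (fun _ => hk0 _) (by linarith [pi_pos])
    _ = _ := by
        rw [hk, intervalIntegral.integral_div, integral_max_two_mul_cos_rpow hs,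
          integral_cos_rpow hs.le, rpow_sub two_pos, rpow_one]
        congr 1
        ring_nf
end

section
/- If f(z) = Σ_{n=0}^∞ a_n z^n is analytic on the closed unit disk, then ∫_0^{2π} ∫_0^{2π} |f(e^{iφ}) - f(e^{iθ})|² / |e^{iφ} - e^{iθ}|² dθ dφ = 4π² Σ_{n=1}^∞ n |a_n|². -/
/-!
Write `f z - f w = (z - w) * g z w` with `g z w = ∑ₘ dₘ(z) wᵐ` and `dₘ(z) = ∑ₖ a_{m+k+1} zᵏ`
(`tailSeries a m z`). Off the diagonal the integrand is `|g(e^{iφ}, e^{iθ})|²`, so Parseval in `θ`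
gives `2π ∑ₘ |dₘ(e^{iφ})|²`, and Parseval again in `φ` gives `4π² ∑ₘ ∑ₖ |a_{m+k+1}|²`, in which
`aₙ` occurs exactly `n` times. Every interchange of sums and integrals is justified by
`∑ n |aₙ| < ∞`, which holds because the power series converges on a disk of radius `> 1`.
-/

open Complex Real intervalIntegral Finset ComplexConjugate MeasureTheory

theorem HasSum.sum_antidiagonal {α : Type*} [AddCommMonoid α] [TopologicalSpace α]
    [ContinuousAdd α] [RegularSpace α] {F : ℕ × ℕ → α} {s : α} (h : HasSum F s) :
    HasSum (fun n => ∑ p ∈ antidiagonal n, F p) s :=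
  (HasAntidiagonal.sigmaAntidiagonalEquivProd.hasSum_iff.mpr h).sigma fun n => by
    rw [← sum_coe_sort]; exact hasSum_fintype _

lemma sum_antidiagonal_comp_add {α : Type*} [AddCommMonoid α] (u : ℕ → α) (n : ℕ) :
    ∑ p ∈ antidiagonal n, u (p.1 + p.2) = (n + 1) • u n := by
  rw [sum_congr rfl fun p hp => by rw [mem_antidiagonal.mp hp], sum_const,
    Nat.card_antidiagonal]

theorem summable_prod_comp_add_iff {u : ℕ → ℝ} (hu : ∀ n, 0 ≤ u n) :
    Summable (fun p : ℕ × ℕ => u (p.1 + p.2)) ↔ Summable (fun n => (n + 1) * u n) := by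
  rw [← HasAntidiagonal.sigmaAntidiagonalEquivProd.summable_iff]
  refine (summable_sigma_of_nonneg fun _ => hu _).trans ?_
  simp only [HasAntidiagonal.sigmaAntidiagonalEquivProd_apply, tsum_fintype,
    sum_coe_sort (antidiagonal _) fun p => u (p.1 + p.2), sum_antidiagonal_comp_add,
    nsmul_eq_mul, Nat.cast_add, Nat.cast_one]
  exact and_iff_right fun _ => Summable.of_finite

section

variable {u : ℕ → ℝ}

theorem summable_prod_comp_add_add_one (hu : ∀ n, 0 ≤ u n) (h : Summable fun n => n * u n) :
    Summable fun p : ℕ × ℕ => u (p.1 + p.2 + 1) :=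
  (summable_prod_comp_add_iff fun n => hu (n + 1)).mpr <| by
    simpa using (summable_nat_add_iff 1).mpr h

theorem tsum_prod_comp_add_add_one (hu : ∀ n, 0 ≤ u n) (h : Summable fun n => n * u n) :
    ∑' p : ℕ × ℕ, u (p.1 + p.2 + 1) = ∑' n, n * u n := by
  rw [← (summable_prod_comp_add_add_one hu h).hasSum.sum_antidiagonal.tsum_eq, h.tsum_eq_zero_add]
  simp [sum_antidiagonal_comp_add fun n => u (n + 1)]

theorem summable_nat_mul_sq_of_summable_nat_mul (hu : ∀ n, 0 ≤ u n)
    (h : Summable fun n => n * u n) : Summable fun n => n * u n ^ 2 := by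
  refine .of_nonneg_of_le (fun n => by positivity) (fun n => ?_) (h.mul_left (∑' n, n * u n))
  rcases n.eq_zero_or_pos with rfl | hn
  · simp
  have hle : u n ≤ ∑' n, n * u n :=
    (le_mul_of_one_le_left (hu n) (by exact_mod_cast hn)).trans
      (h.le_tsum n fun m _ => mul_nonneg m.cast_nonneg (hu m))
  calc (n : ℝ) * u n ^ 2 = u n * (n * u n) := by ring
    _ ≤ _ := mul_le_mul_of_nonneg_right hle (mul_nonneg n.cast_nonneg (hu n))

end

theorem hasSum_ite_diag_iff {α : Type*} [AddCommMonoid α] [TopologicalSpace α] {g : ℕ → α}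
    {s : α} : HasSum (fun p : ℕ × ℕ => if p.1 = p.2 then g p.1 else 0) s ↔ HasSum g s := by
  have hoff : ∀ p ∉ Set.range fun n : ℕ => (n, n), (if p.1 = p.2 then g p.1 else 0) = 0 := by
    rintro ⟨n, m⟩ hnm
    exact if_neg fun h : n = m => hnm ⟨n, h ▸ rfl⟩
  have hinj : Function.Injective fun n : ℕ => (n, n) := fun _ _ h => congrArg Prod.fst h
  rw [← hinj.hasSum_iff hoff]
  simp only [Function.comp_def, if_pos]

lemma mul_sum_antidiagonal_pow_mul_pow {R : Type*} [CommRing R] (z w : R) (n : ℕ) :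
    (z - w) * ∑ p ∈ antidiagonal n, w ^ p.1 * z ^ p.2 = z ^ (n + 1) - w ^ (n + 1) := by
  rw [Nat.sum_antidiagonal_eq_sum_range_succ (fun i j => w ^ i * z ^ j), mul_comm,
    ← geom_sum₂_mul, geom_sum₂_comm, Nat.add_sub_cancel]

theorem sub_eq_mul_tsum_prod {R : Type*} [NormedCommRing R] {a : ℕ → R} {z w s t : R}
    (hz : HasSum (fun n => a n * z ^ n) s) (hw : HasSum (fun n => a n * w ^ n) t)
    (h : Summable fun p : ℕ × ℕ => a (p.1 + p.2 + 1) * z ^ p.2 * w ^ p.1) :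
    s - t = (z - w) * ∑' p : ℕ × ℕ, a (p.1 + p.2 + 1) * z ^ p.2 * w ^ p.1 := by
  have hsub : HasSum (fun n => a (n + 1) * (z ^ (n + 1) - w ^ (n + 1))) (s - t) := by
    simpa [mul_sub] using (hasSum_nat_add_iff' 1).mpr (hz.sub hw)
  have hterm : ∀ n, ∑ p ∈ antidiagonal n, (z - w) * (a (p.1 + p.2 + 1) * z ^ p.2 * w ^ p.1) =
      a (n + 1) * (z ^ (n + 1) - w ^ (n + 1)) := fun n => by
    rw [← mul_sum_antidiagonal_pow_mul_pow, mul_sum, mul_sum]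
    refine sum_congr rfl fun p hp => ?_
    rw [mem_antidiagonal.mp hp]; ring
  have hprod := (h.hasSum.mul_left (z - w)).sum_antidiagonal
  simp only [hterm] at hprod
  exact hsub.unique hprod

lemma integral_exp_int_mul_mul_I (k : ℤ) :
    ∫ θ in (0:ℝ)..2 * π, cexp (k * θ * I) = if k = 0 then (2 * π : ℂ) else 0 := by
  split_ifs with hk
  · simp [hk]
  have hkI : (k * I : ℂ) ≠ 0 := mul_ne_zero (by exact_mod_cast hk) I_ne_zero
  have h := integral_exp_mul_complex (a := 0) (b := 2 * π) hkI
  simp only [mul_right_comm _ I] at h ⊢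
  rw [h]
  have h2π : cexp (k * ↑(2 * π) * I) = 1 := by
    rw [← exp_int_mul_two_pi_mul_I k]; push_cast; ring_nf
  rw [h2π, ofReal_zero, mul_zero, zero_mul, Complex.exp_zero, sub_self, zero_div]

lemma integral_exp_mul_I_pow_mul_conj (n m : ℕ) :
    ∫ θ in (0:ℝ)..2 * π, cexp (θ * I) ^ n * conj (cexp (θ * I) ^ m) =
      if n = m then (2 * π : ℂ) else 0 := by
  have h : ∀ θ : ℝ, cexp (θ * I) ^ n * conj (cexp (θ * I) ^ m) =
      cexp (((n - m : ℤ) : ℂ) * θ * I) := fun θ => by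
    rw [← Complex.exp_nat_mul, ← Complex.exp_nat_mul, ← exp_conj, ← Complex.exp_add]
    congr 1
    simp only [map_mul, map_natCast, conj_ofReal, conj_I]
    push_cast; ring
  simp only [h, integral_exp_int_mul_mul_I, sub_eq_zero, Nat.cast_inj]

lemma norm_mul_exp_mul_I_pow (c : ℂ) (θ : ℝ) (n : ℕ) : ‖c * cexp (θ * I) ^ n‖ = ‖c‖ := by
  simp [norm_exp_ofReal_mul_I]

theorem integral_norm_tsum_mul_exp_mul_I_pow_sq {c : ℕ → ℂ} (hc : Summable fun n => ‖c n‖) :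
    ∫ θ in (0:ℝ)..2 * π, ‖∑' n, c n * cexp (θ * I) ^ n‖ ^ 2 = 2 * π * ∑' n, ‖c n‖ ^ 2 := by
  set F : ℕ × ℕ → ℝ → ℂ := fun p θ =>
    c p.1 * conj (c p.2) * (cexp (θ * I) ^ p.1 * conj (cexp (θ * I) ^ p.2))
  have hsummable : ∀ θ : ℝ, Summable fun n => ‖c n * cexp (θ * I) ^ n‖ := fun θ => by
    simpa only [norm_mul_exp_mul_I_pow] using hc
  have hF : ∀ θ : ℝ, ((‖∑' n, c n * cexp (θ * I) ^ n‖ ^ 2 : ℝ) : ℂ) = ∑' p, F p θ := fun θ => by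
    rw [ofReal_pow, ← mul_conj', ← Complex.star_def, tsum_star,
      tsum_mul_tsum_of_summable_norm (hsummable θ) (by simpa using hsummable θ)]
    congr 1 with p
    simp only [F, star_def, map_mul]
    ring
  have hFbound : ∀ p θ, ‖F p θ‖ = ‖c p.1‖ * ‖c p.2‖ := fun p θ => by
    simp [F, norm_exp_ofReal_mul_I]
  have hint : HasSum (fun p => ∫ θ in (0:ℝ)..2 * π, F p θ)
      (∫ θ in (0:ℝ)..2 * π, ∑' p, F p θ) := by
    have hbound : Summable fun p : ℕ × ℕ => ‖c p.1‖ * ‖c p.2‖ :=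
      hc.mul_of_nonneg hc (fun _ => norm_nonneg _) fun _ => norm_nonneg _
    refine hasSum_integral_of_dominated_convergence (fun p _ => ‖c p.1‖ * ‖c p.2‖)
      (fun p => (by fun_prop : Continuous (F p)).aestronglyMeasurable)
      (fun p => .of_forall fun θ _ => (hFbound p θ).le) (.of_forall fun _ _ => hbound)
      intervalIntegrable_const (.of_forall fun θ _ => ?_)
    exact (Summable.of_norm (by simpa only [hFbound] using hbound)).hasSum
  have hdiag : ∀ p : ℕ × ℕ, ∫ θ in (0:ℝ)..2 * π, F p θ =
      if p.1 = p.2 then ((‖c p.1‖ ^ 2 * (2 * π) : ℝ) : ℂ) else 0 := fun p => by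
    rw [intervalIntegral.integral_const_mul, integral_exp_mul_I_pow_mul_conj]
    split_ifs with h
    · rw [h, mul_conj']; push_cast; ring
    · exact mul_zero _
  have hdiag_sum : HasSum (fun n => ((‖c n‖ ^ 2 * (2 * π) : ℝ) : ℂ))
      (∫ θ in (0:ℝ)..2 * π, ‖∑' n, c n * cexp (θ * I) ^ n‖ ^ 2 : ℝ) := by
    rw [← intervalIntegral.integral_ofReal]
    simp only [hF]
    simp only [hdiag] at hint
    exact hasSum_ite_diag_iff.mp hint
  rw [mul_comm (2 * π), ← tsum_mul_right]
  exact (hasSum_ofReal.mp hdiag_sum).tsum_eq.symm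

lemma countable_setOf_exp_mul_I_eq (φ : ℝ) :
    {θ : ℝ | cexp (θ * I) = cexp (φ * I)}.Countable :=
  (Set.countable_range fun m : ℤ => φ + m * (2 * π)).mono fun θ hθ => by
    obtain ⟨m, hm⟩ := Circle.exp_eq_exp.mp (Subtype.ext hθ : Circle.exp θ = Circle.exp φ)
    exact ⟨m, hm.symm⟩

noncomputable def tailSeries (a : ℕ → ℂ) (m : ℕ) (z : ℂ) : ℂ := ∑' k, a (m + k + 1) * z ^ k

section

variable {a : ℕ → ℂ}

lemma summable_norm_tailSeries_coeff (ha : Summable fun n => n * ‖a n‖) (m : ℕ) :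
    Summable fun k => ‖a (m + k + 1)‖ :=
  (summable_prod_comp_add_add_one (fun _ => norm_nonneg _) ha).prod_factor m

lemma norm_tailSeries_le (ha : Summable fun n => n * ‖a n‖) {z : ℂ} (hz : ‖z‖ ≤ 1) (m : ℕ) :
    ‖tailSeries a m z‖ ≤ ∑' k, ‖a (m + k + 1)‖ := by
  have hle : ∀ k, ‖a (m + k + 1) * z ^ k‖ ≤ ‖a (m + k + 1)‖ := fun k => by
    rw [norm_mul, norm_pow]
    exact mul_le_of_le_one_right (norm_nonneg _) (pow_le_one₀ (norm_nonneg _) hz)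
  exact tsum_of_norm_bounded (summable_norm_tailSeries_coeff ha m).hasSum hle

lemma summable_norm_tailSeries (ha : Summable fun n => n * ‖a n‖) {z : ℂ} (hz : ‖z‖ ≤ 1) :
    Summable fun m => ‖tailSeries a m z‖ :=
  .of_nonneg_of_le (fun _ => norm_nonneg _) (norm_tailSeries_le ha hz)
    (summable_prod_comp_add_add_one (fun _ => norm_nonneg _) ha).prod

lemma continuous_tailSeries_exp_mul_I (ha : Summable fun n => n * ‖a n‖) (m : ℕ) :
    Continuous fun φ : ℝ => tailSeries a m (cexp (φ * I)) :=
  continuous_tsum (fun k => by fun_prop) (summable_norm_tailSeries_coeff ha m)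
    fun k φ => (norm_mul_exp_mul_I_pow _ φ k).le

lemma sub_eq_mul_tsum_tailSeries (ha : Summable fun n => n * ‖a n‖) {z w s t : ℂ}
    (hz : ‖z‖ ≤ 1) (hw : ‖w‖ ≤ 1) (hs : HasSum (fun n => a n * z ^ n) s)
    (ht : HasSum (fun n => a n * w ^ n) t) :
    s - t = (z - w) * ∑' m, tailSeries a m z * w ^ m := by
  have hle : ∀ p : ℕ × ℕ, ‖a (p.1 + p.2 + 1) * z ^ p.2 * w ^ p.1‖ ≤ ‖a (p.1 + p.2 + 1)‖ :=
    fun p => by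
      rw [norm_mul, norm_mul, norm_pow, norm_pow]
      exact (mul_le_of_le_one_right (by positivity) (pow_le_one₀ (norm_nonneg _) hw)).trans
        (mul_le_of_le_one_right (norm_nonneg _) (pow_le_one₀ (norm_nonneg _) hz))
  have hsum : Summable fun p : ℕ × ℕ => a (p.1 + p.2 + 1) * z ^ p.2 * w ^ p.1 :=
    .of_norm_bounded (summable_prod_comp_add_add_one (fun _ => norm_nonneg _) ha) hle
  rw [sub_eq_mul_tsum_prod hs ht hsum, hsum.tsum_prod]
  simp only [tailSeries, ← tsum_mul_right]

lemma integral_norm_sub_sq_div_norm_sub_sq (ha : Summable fun n => n * ‖a n‖) {f : ℂ → ℂ}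
    (hf : ∀ z : ℂ, ‖z‖ = 1 → HasSum (fun n => a n * z ^ n) (f z)) (φ : ℝ) :
    ∫ θ in (0:ℝ)..2 * π, ‖f (cexp (φ * I)) - f (cexp (θ * I))‖ ^ 2 /
        ‖cexp (φ * I) - cexp (θ * I)‖ ^ 2 =
      2 * π * ∑' m, ‖tailSeries a m (cexp (φ * I))‖ ^ 2 := by
  rw [← integral_norm_tsum_mul_exp_mul_I_pow_sq
    (summable_norm_tailSeries ha (norm_exp_ofReal_mul_I φ).le)]
  refine integral_congr_ae ?_
  filter_upwards [measure_eq_zero_iff_ae_notMem.mp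
    ((countable_setOf_exp_mul_I_eq φ).measure_zero volume)] with θ hθ _
  have hne : ‖cexp (φ * I) - cexp (θ * I)‖ ^ 2 ≠ 0 :=
    pow_ne_zero _ (norm_ne_zero_iff.mpr (sub_ne_zero.mpr fun h => hθ h.symm))
  rw [sub_eq_mul_tsum_tailSeries ha (norm_exp_ofReal_mul_I φ).le (norm_exp_ofReal_mul_I θ).le
    (hf _ (norm_exp_ofReal_mul_I φ)) (hf _ (norm_exp_ofReal_mul_I θ)), norm_mul, mul_pow,
    mul_div_cancel_left₀ _ hne]

lemma integral_tsum_norm_tailSeries_sq (ha : Summable fun n => n * ‖a n‖) :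
    ∫ φ in (0:ℝ)..2 * π, ∑' m, ‖tailSeries a m (cexp (φ * I))‖ ^ 2 =
      2 * π * ∑' n : ℕ, n * ‖a n‖ ^ 2 := by
  have hm : ∀ m, ∫ φ in (0:ℝ)..2 * π, ‖tailSeries a m (cexp (φ * I))‖ ^ 2 =
      2 * π * ∑' k, ‖a (m + k + 1)‖ ^ 2 := fun m => by
    rw [← integral_norm_tsum_mul_exp_mul_I_pow_sq (summable_norm_tailSeries_coeff ha m)]
    rfl
  have hnsq : Summable fun n => n * ‖a n‖ ^ 2 :=
    summable_nat_mul_sq_of_summable_nat_mul (fun _ => norm_nonneg _) ha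
  have hsq : Summable fun p : ℕ × ℕ => ‖a (p.1 + p.2 + 1)‖ ^ 2 :=
    summable_prod_comp_add_add_one (u := fun n => ‖a n‖ ^ 2) (fun _ => sq_nonneg _) hnsq
  have h2π : (0:ℝ) ≤ 2 * π := by positivity
  have hcont : ∀ m, Continuous fun φ : ℝ => ‖tailSeries a m (cexp (φ * I))‖ ^ 2 := fun m =>
    (continuous_tailSeries_exp_mul_I ha m).norm.pow 2
  have hm' : ∀ m, ∫ φ in Set.Ioc 0 (2 * π), ‖‖tailSeries a m (cexp (φ * I))‖ ^ 2‖ =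
      2 * π * ∑' k, ‖a (m + k + 1)‖ ^ 2 := fun m => by
    simp only [norm_pow, norm_norm, ← integral_of_le h2π, hm]
  rw [integral_of_le h2π, ← integral_tsum_of_summable_integral_norm
    (μ := volume.restrict (Set.Ioc 0 (2 * π)))
    (F := fun m φ => ‖tailSeries a m (cexp (φ * I))‖ ^ 2)
    (fun m => (hcont m).integrableOn_Ioc)
    (by simpa only [hm'] using hsq.prod.mul_left (2 * π))]
  simp only [← integral_of_le h2π, hm, tsum_mul_left]
  rw [← hsq.tsum_prod,
    tsum_prod_comp_add_add_one (u := fun n => ‖a n‖ ^ 2) (fun _ => sq_nonneg _) hnsq]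

theorem integral_integral_norm_sub_sq_div_norm_sub_sq (ha : Summable fun n => n * ‖a n‖)
    {f : ℂ → ℂ} (hf : ∀ z : ℂ, ‖z‖ = 1 → HasSum (fun n => a n * z ^ n) (f z)) :
    ∫ φ in (0:ℝ)..2 * π, ∫ θ in (0:ℝ)..2 * π,
        ‖f (cexp (φ * I)) - f (cexp (θ * I))‖ ^ 2 / ‖cexp (φ * I) - cexp (θ * I)‖ ^ 2 =
      4 * π ^ 2 * ∑' n : ℕ, n * ‖a n‖ ^ 2 := by
  simp only [integral_norm_sub_sq_div_norm_sub_sq ha hf, intervalIntegral.integral_const_mul,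
    integral_tsum_norm_tailSeries_sq ha]
  ring

end

lemma summable_nat_mul_norm_of_summable_mul_pow {a : ℕ → ℂ} {r : ℝ} (hr : 1 < r)
    (h : Summable fun n => a n * (r : ℂ) ^ n) : Summable fun n => n * ‖a n‖ := by
  obtain ⟨C, hC⟩ := h.tendsto_atTop_zero.norm.bddAbove_range
  have hr' : ‖r⁻¹‖ < 1 := by
    rw [norm_inv, Real.norm_of_nonneg (by linarith)]; exact inv_lt_one_of_one_lt₀ hr
  refine .of_nonneg_of_le (fun n => by positivity) (fun n => ?_)
    ((summable_pow_mul_geometric_of_norm_lt_one 1 hr').mul_left C)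
  calc (n : ℝ) * ‖a n‖ = ‖a n * (r : ℂ) ^ n‖ * ((n : ℝ) ^ 1 * r⁻¹ ^ n) := by
        rw [norm_mul, norm_pow, norm_real, Real.norm_of_nonneg (by linarith), inv_pow]
        field_simp
    _ ≤ C * ((n : ℝ) ^ 1 * r⁻¹ ^ n) := by
        gcongr
        exact hC ⟨n, rfl⟩

/-- For `f(z) = Σ aₙ zⁿ` analytic on a neighborhood of the closed unit disk,
`∫∫ |f(e^{iφ}) - f(e^{iθ})|²/|e^{iφ} - e^{iθ}|² dθ dφ = 4π² Σ n |aₙ|²`. -/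
theorem double_integral_boundary (R : ℝ) (hR : 1 < R) (f : ℂ → ℂ) (a : ℕ → ℂ)
    (hsum : ∀ z : ℂ, ‖z‖ < R → HasSum (fun n : ℕ => a n * z ^ n) (f z)) :
    (∫ φ in (0:ℝ)..(2 * π), ∫ θ in (0:ℝ)..(2 * π),
        ‖f (Complex.exp (φ * Complex.I)) - f (Complex.exp (θ * Complex.I))‖ ^ 2 /
          ‖Complex.exp (φ * Complex.I) - Complex.exp (θ * Complex.I)‖ ^ 2) =
      4 * π ^ 2 * ∑' n : ℕ, (n : ℝ) * ‖a n‖ ^ 2 := by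
  obtain ⟨r, hr1, hrR⟩ := exists_between hR
  have ha : Summable fun n => n * ‖a n‖ :=
    summable_nat_mul_norm_of_summable_mul_pow hr1
      (hsum r (by rwa [norm_real, Real.norm_of_nonneg (by linarith)])).summable
  exact integral_integral_norm_sub_sq_div_norm_sub_sq ha fun z hz => hsum z (by linarith)
end

section
/- Let U_n(z) = sin((n+1) arccos z)/√(1 - z²) be the Chebyshev polynomial of the second kind, and let D be the open elliptical region b²x² + a²y² < a²b² with foci ±1 (so a² - b² = 1), a = cosh c, b = sinh c, c > 0. Then for n ≠ m, ∬_D U_n(z) \overline{U_m(z)} dx dy = 0. -/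
/-!
Substitute `z = cos ζ`. Since `cos (x + y i) = cos x cosh y - i sin x sinh y`, the line
`Im ζ = y` is mapped onto the confocal ellipse with semi-axes `cosh y`, `|sinh y|`, so `cos` maps
the half-strip `0 < Re ζ ≤ 2π`, `-c < Im ζ < 0` injectively onto `D` up to a segment of the real
axis. The Jacobian is `|sin ζ|²` and `U_n(cos ζ) sin ζ = sin ((n+1) ζ)`, so the integral becomes
`∫_{-c}^0 ∫_0^{2π} sin ((n+1)(x+iy)) conj (sin ((m+1)(x+iy))) dx dy`. By the product-to-sum formula
the inner integrand is a difference of terms `cos (k x + d)` with `k = n - m` and `k = n + m + 2`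
nonzero integers, whose integrals over a period vanish.
-/

open MeasureTheory Complex Set Polynomial ComplexConjugate
open scoped Real

def ellipseInterior (c : ℝ) : Set ℂ :=
  {z | Real.sinh c ^ 2 * z.re ^ 2 + Real.cosh c ^ 2 * z.im ^ 2 < Real.cosh c ^ 2 * Real.sinh c ^ 2}

lemma Complex.cos_re (ζ : ℂ) : (cos ζ).re = Real.cos ζ.re * Real.cosh ζ.im := by
  rw [cos_eq]; simp [← ofReal_cos, ← ofReal_cosh, ← ofReal_sin, ← ofReal_sinh]

lemma Complex.cos_im (ζ : ℂ) : (cos ζ).im = -(Real.sin ζ.re * Real.sinh ζ.im) := by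
  rw [cos_eq]; simp [← ofReal_cos, ← ofReal_cosh, ← ofReal_sin, ← ofReal_sinh]

lemma Real.sinh_sq_lt_sinh_sq_iff {x y : ℝ} : Real.sinh x ^ 2 < Real.sinh y ^ 2 ↔ |x| < |y| := by
  rw [sq_lt_sq, Real.abs_sinh, Real.abs_sinh, Real.sinh_lt_sinh]

lemma cos_mem_ellipseInterior_iff {c : ℝ} (hc : c ≠ 0) (ζ : ℂ) :
    cos ζ ∈ ellipseInterior c ↔ |ζ.im| < |c| := by
  have key : Real.sinh c ^ 2 * (cos ζ).re ^ 2 + Real.cosh c ^ 2 * (cos ζ).im ^ 2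
      - Real.cosh c ^ 2 * Real.sinh c ^ 2
      = (Real.sinh ζ.im ^ 2 - Real.sinh c ^ 2) * (Real.cosh c ^ 2 - Real.cos ζ.re ^ 2) := by
    simp only [cos_re, cos_im, mul_pow, neg_sq, Real.cosh_sq', Real.sin_sq]
    ring
  have hpos : 0 < Real.cosh c ^ 2 - Real.cos ζ.re ^ 2 := by
    have : 0 < Real.sinh c ^ 2 := by positivity [Real.sinh_ne_zero.2 hc]
    nlinarith [Real.cosh_sq' c, Real.cos_sq_le_one ζ.re]
  rw [← Real.sinh_sq_lt_sinh_sq_iff, ellipseInterior, mem_ofPred_eq, ← sub_neg, key,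
    mul_neg_iff]
  constructor
  · rintro (⟨-, h⟩ | ⟨h, -⟩) <;> linarith
  · intro h; exact Or.inr ⟨by linarith, hpos⟩

lemma injOn_cos_reProdIm : InjOn cos (Ioc 0 (2 * π) ×ℂ Iio 0) := by
  rintro ζ ⟨⟨hζ₁, hζ₂⟩, hζ⟩ ξ ⟨⟨hξ₁, hξ₂⟩, hξ⟩ h
  obtain ⟨k, hk | hk⟩ := Complex.cos_eq_cos_iff.1 h
  · have hξre : ξ.re = 2 * k * π + ζ.re := by simp [hk]
    have hk0 : k = 0 := by
      have h1 : (-1 : ℝ) < k := by nlinarith [Real.pi_pos]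
      have h2 : (k : ℝ) < 1 := by nlinarith [Real.pi_pos]
      have : (-1 : ℤ) < k ∧ k < 1 := ⟨by exact_mod_cast h1, by exact_mod_cast h2⟩
      omega
    simp [hk, hk0]
  · have hξim : ξ.im = -ζ.im := by simp [hk]
    simp only [mem_preimage, mem_Iio] at hζ hξ
    linarith

lemma exists_mem_reProdIm_cos_eq {z : ℂ} (hz : z.im ≠ 0) :
    ∃ ζ ∈ Ioc 0 (2 * π) ×ℂ Iio 0, cos ζ = z := by
  obtain ⟨ζ₀, hζ₀, rfl⟩ : ∃ ζ₀ : ℂ, ζ₀.im < 0 ∧ cos ζ₀ = z := by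
    obtain ⟨ζ₀, rfl⟩ := Complex.cos_surjective z
    have : ζ₀.im ≠ 0 := fun h => hz (by simp [cos_im, h])
    rcases this.lt_or_gt with h | h
    · exact ⟨ζ₀, h, rfl⟩
    · exact ⟨-ζ₀, by simpa using h, Complex.cos_neg ζ₀⟩
  have hper : Function.Periodic (fun t : ℝ => cos (t + ζ₀.im * I)) (2 * π) := fun t => by
    simpa [add_right_comm] using Complex.cos_periodic (t + ζ₀.im * I)
  obtain ⟨t, ht, hcos⟩ := hper.exists_mem_Ioc Real.two_pi_pos ζ₀.re 0
  refine ⟨t + ζ₀.im * I, ⟨by simpa using ht, by simpa using hζ₀⟩, ?_⟩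
  rw [← hcos]; simp only [re_add_im]

lemma volume_setOf_im_eq_zero : volume {z : ℂ | z.im = 0} = 0 := by
  have h : {z : ℂ | z.im = 0} = (LinearMap.ker imLm : Set ℂ) := by
    ext z; simp [LinearMap.mem_ker]
  rw [h]
  refine Measure.addHaar_submodule _ _ fun htop => ?_
  have : I ∈ LinearMap.ker imLm := htop ▸ Submodule.mem_top
  simp at this

lemma ellipseInterior_ae_eq_image_cos {c : ℝ} (hc : 0 < c) :
    ellipseInterior c =ᵐ[volume] cos '' (Ioc 0 (2 * π) ×ℂ Ioo (-c) 0) := by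
  have hsub : cos '' (Ioc 0 (2 * π) ×ℂ Ioo (-c) 0) ⊆ ellipseInterior c := by
    rintro _ ⟨ζ, ⟨-, him⟩, rfl⟩
    rw [cos_mem_ellipseInterior_iff hc.ne', abs_of_neg him.2, abs_of_pos hc]
    linarith [him.1]
  have hsup : ellipseInterior c \ {z | z.im = 0} ⊆ cos '' (Ioc 0 (2 * π) ×ℂ Ioo (-c) 0) := by
    rintro z ⟨hz, him⟩
    obtain ⟨ζ, ⟨hre, him'⟩, rfl⟩ := exists_mem_reProdIm_cos_eq him
    rw [cos_mem_ellipseInterior_iff hc.ne', abs_of_neg him', abs_of_pos hc] at hz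
    exact ⟨ζ, ⟨hre, by linarith, him'⟩, rfl⟩
  rw [ae_eq_set, sdiff_eq_empty.2 hsub, measure_empty]
  exact ⟨measure_mono_null (sdiff_subset_comm.1 hsup) volume_setOf_im_eq_zero, rfl⟩

lemma det_smul_one_eq_normSq (w : ℂ) : (w • 1 : ℂ →L[ℝ] ℂ).det = normSq w := by
  have h : (w • 1 : ℂ →L[ℝ] ℂ).toLinearMap = Algebra.lmul ℝ ℂ w := by
    ext z; simp
  rw [ContinuousLinearMap.det, h, ← Algebra.norm_apply, Algebra.norm_complex_apply]

lemma normSq_sin_smul_chebyshevU_cos_mul_conj (n m : ℤ) (ζ : ℂ) :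
    normSq (sin ζ) • ((Chebyshev.U ℂ n).eval (cos ζ) * conj ((Chebyshev.U ℂ m).eval (cos ζ)))
      = sin ((n + 1) * ζ) * conj (sin ((m + 1) * ζ)) := by
  rw [← Chebyshev.U_complex_cos, ← Chebyshev.U_complex_cos, real_smul, ← mul_conj, map_mul]
  ring

lemma integral_cos_int_mul_add {k : ℤ} (hk : k ≠ 0) (d : ℂ) :
    ∫ x in (0 : ℝ)..2 * π, cos (k * x + d) = 0 := by
  have hk' : (k : ℂ) ≠ 0 := Int.cast_ne_zero.2 hk
  have hderiv (x : ℝ) : HasDerivAt (fun x : ℝ => sin (k * x + d) / k) (cos (k * x + d)) x := by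
    have h : HasDerivAt (fun w : ℂ => sin (k * w + d) / k) (cos (k * x + d) * (k * 1) / k) x :=
      (((hasDerivAt_id _).const_mul _).add_const d).csin.div_const _
    simpa [hk'] using h.comp_ofReal
  rw [intervalIntegral.integral_eq_sub_of_hasDerivAt (fun x _ => hderiv x)
    (Continuous.intervalIntegrable (by fun_prop) _ _)]
  rw [show (k : ℂ) * ((2 * π : ℝ) : ℂ) + d = d + k * (2 * π) by push_cast; ring,
    sin_add_int_mul_two_pi]
  simp

lemma integral_sin_mul_conj_sin {n m : ℕ} (hnm : n ≠ m) (y : ℝ) :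
    ∫ x in (0 : ℝ)..2 * π, sin ((n + 1) * (x + y * I)) * conj (sin ((m + 1) * (x + y * I)))
      = 0 := by
  have hprod (x : ℝ) : sin ((n + 1) * (x + y * I)) * conj (sin ((m + 1) * (x + y * I)))
      = (cos (((n - m : ℤ) : ℂ) * x + (n + m + 2) * y * I)
        - cos (((n + m + 2 : ℤ) : ℂ) * x + (n - m) * y * I)) / 2 := by
    rw [← sin_conj]
    simp only [map_mul, map_add, map_one, map_natCast, conj_ofReal, conj_I]
    rw [show ((n - m : ℤ) : ℂ) * x + (n + m + 2) * y * I
        = (n + 1) * (x + y * I) - (m + 1) * (x + y * -I) by push_cast; ring,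
      show ((n + m + 2 : ℤ) : ℂ) * x + (n - m) * y * I
        = (n + 1) * (x + y * I) + (m + 1) * (x + y * -I) by push_cast; ring,
      cos_sub, cos_add]
    ring
  simp_rw [hprod]
  rw [intervalIntegral.integral_div, intervalIntegral.integral_sub
      (Continuous.intervalIntegrable (by fun_prop) _ _)
      (Continuous.intervalIntegrable (by fun_prop) _ _),
    integral_cos_int_mul_add (by omega), integral_cos_int_mul_add (by omega)]
  simp

lemma setIntegral_reProdIm_eq_zero {E : Type*} [NormedAddCommGroup E] [NormedSpace ℝ E]
    {f : ℂ → E} (s t : Set ℝ) (h : ∀ y : ℝ, ∫ x in s, f (x + y * I) = 0) :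
    ∫ z in s ×ℂ t, f z = 0 := by
  set g : ℝ × ℝ → E := fun p => f (p.1 + p.2 * I)
  have hfg : ∫ z in s ×ℂ t, f z = ∫ p in s ×ˢ t, g p := by
    rw [← volume_preserving_equiv_real_prod.setIntegral_preimage_emb
      measurableEquivRealProd.measurableEmbedding]
    simp only [measurableEquivRealProd_apply, re_add_im, g]
    rfl
  rw [hfg, Measure.volume_eq_prod, ← Measure.prod_restrict]
  by_cases hg : Integrable g ((volume.restrict s).prod (volume.restrict t))
  · simp [integral_prod_symm g hg, g, h]
  · exact integral_undef hg

/-- Chebyshev polynomials of the second kind are orthogonal over the elliptical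
region `b²x² + a²y² < a²b²` with `a = cosh c`, `b = sinh c`. -/
theorem chebyshevU_orthogonal_ellipse (c : ℝ) (hc : 0 < c) (n m : ℕ) (hnm : n ≠ m) :
    (∫ z in {z : ℂ | (Real.sinh c) ^ 2 * z.re ^ 2 + (Real.cosh c) ^ 2 * z.im ^ 2 <
        (Real.cosh c) ^ 2 * (Real.sinh c) ^ 2},
      (Polynomial.Chebyshev.U ℂ n).eval z *
        (starRingEnd ℂ) ((Polynomial.Chebyshev.U ℂ m).eval z)) = 0 := by
  have hstrip : MeasurableSet (Ioc 0 (2 * π) ×ℂ Ioo (-c) 0) :=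
    (measurableSet_Ioc.preimage measurable_re).inter (measurableSet_Ioo.preimage measurable_im)
  change ∫ z in ellipseInterior c, _ = 0
  rw [setIntegral_congr_set (ellipseInterior_ae_eq_image_cos hc),
    integral_image_eq_integral_abs_det_fderiv_smul volume hstrip
      (fun ζ _ => (hasDerivAt_cos ζ).complexToReal_fderiv.hasFDerivWithinAt)
      (injOn_cos_reProdIm.mono (inter_subset_inter_right _ (preimage_mono Ioo_subset_Iio_self)))]
  simp_rw [det_smul_one_eq_normSq, normSq_neg, abs_of_nonneg (normSq_nonneg _),
    normSq_sin_smul_chebyshevU_cos_mul_conj]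
  refine setIntegral_reProdIm_eq_zero _ _ fun y => ?_
  rw [← intervalIntegral.integral_of_le Real.two_pi_pos.le]
  exact_mod_cast integral_sin_mul_conj_sin hnm y
end
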